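/- Let T>0, λ>0, γ≥0, σ>0, α>0, and x₁,x₂∈ℝ. Define Σ(t) = (x₁+x₂)·e^{−γt/(6λ)}·sinh((T−t)√(γ²+12αλσ²)/(6λ))/sinh(T√(γ²+12αλσ²)/(6λ)) and Δ(t) = (x₁−x₂)·e^{γt/(2λ)}·sinh((T−t)√(γ²+4αλσ²)/(2λ))/sinh(T√(γ²+4αλσ²)/(2λ)), and set X₁*(t) = (Σ(t)+Δ(t))/2 and X₂*(t) = (Σ(t)−Δ(t))/2. Then X₁*, X₂* are the unique pair of C² functions on [0,T] satisfying ασ²X₁(t) − 2λẌ₁(t) = γẊ₂(t) + λẌ₂(t) and ασ²X₂(t) − 2λẌ₂(t) = γẊ₁(t) + λẌ₁(t), with X₁(0)=x₁, X₂(0)=x₂, and X₁(T)=X₂(T)=0. -/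

import Mathlib

open Set

/-- The aggregate `Σ(t)` of the two-player equilibrium. -/
noncomputable def SigmaTwo (lam gam sig al T x1 x2 t : ℝ) : ℝ :=
  (x1 + x2) * Real.exp (-(gam * t) / (6 * lam))
    * Real.sinh ((T - t) * Real.sqrt (gam ^ 2 + 12 * al * lam * sig ^ 2) / (6 * lam))
    / Real.sinh (T * Real.sqrt (gam ^ 2 + 12 * al * lam * sig ^ 2) / (6 * lam))

/-- The difference `Δ(t)` of the two-player equilibrium. -/
noncomputable def DeltaTwo (lam gam sig al T x1 x2 t : ℝ) : ℝ :=
  (x1 - x2) * Real.exp (gam * t / (2 * lam))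
    * Real.sinh ((T - t) * Real.sqrt (gam ^ 2 + 4 * al * lam * sig ^ 2) / (2 * lam))
    / Real.sinh (T * Real.sqrt (gam ^ 2 + 4 * al * lam * sig ^ 2) / (2 * lam))

/-- The pair `(X₁, X₂)` is a C² solution of the two-player Euler–Lagrange
system with boundary conditions `X₁(0)=x₁`, `X₂(0)=x₂`, `X₁(T)=X₂(T)=0`. -/
def SolvesTwoPlayer (T lam gam sig al x1 x2 : ℝ) (X1 X2 : ℝ → ℝ) : Prop :=
  ContDiff ℝ 2 X1 ∧ ContDiff ℝ 2 X2 ∧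
  (∀ t ∈ Icc (0 : ℝ) T,
    al * sig ^ 2 * X1 t - 2 * lam * deriv (deriv X1) t
      = gam * deriv X2 t + lam * deriv (deriv X2) t) ∧
  (∀ t ∈ Icc (0 : ℝ) T,
    al * sig ^ 2 * X2 t - 2 * lam * deriv (deriv X2) t
      = gam * deriv X1 t + lam * deriv (deriv X1) t) ∧
  X1 0 = x1 ∧ X2 0 = x2 ∧ X1 T = 0 ∧ X2 T = 0

namespace Stmt6Aux

/-- Basic solution shape. -/
noncomputable def F0 (C a b T D t : ℝ) : ℝ :=
  C * Real.exp (a * t) * Real.sinh ((T - t) * b) / D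

/-- Its derivative. -/
noncomputable def F1 (C a b T D t : ℝ) : ℝ :=
  C * Real.exp (a * t) * (a * Real.sinh ((T - t) * b) - b * Real.cosh ((T - t) * b)) / D

/-- Its second derivative. -/
noncomputable def F2 (C a b T D t : ℝ) : ℝ :=
  C * Real.exp (a * t)
    * ((a ^ 2 + b ^ 2) * Real.sinh ((T - t) * b) - 2 * a * b * Real.cosh ((T - t) * b)) / D

lemma exp_hasDerivAt (a t : ℝ) :
    HasDerivAt (fun s : ℝ => Real.exp (a * s)) (Real.exp (a * t) * a) t := by
  convert ((hasDerivAt_id t).const_mul a).exp using 1 <;> simp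

lemma inner_hasDerivAt (b T t : ℝ) :
    HasDerivAt (fun s : ℝ => (T - s) * b) (-b) t := by
  simpa using ((hasDerivAt_id t).const_sub T).mul_const b

lemma F0_hasDerivAt (C a b T D t : ℝ) : HasDerivAt (F0 C a b T D) (F1 C a b T D t) t := by
  have h2 : HasDerivAt (fun s : ℝ => Real.sinh ((T - s) * b))
      (Real.cosh ((T - t) * b) * (-b)) t :=
    (Real.hasDerivAt_sinh _).comp t (inner_hasDerivAt b T t)
  have h := (((exp_hasDerivAt a t).const_mul C).mul h2).div_const D
  unfold F0 F1
  exact h.congr_deriv (by ring)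

lemma F1_hasDerivAt (C a b T D t : ℝ) : HasDerivAt (F1 C a b T D) (F2 C a b T D t) t := by
  have h2 : HasDerivAt (fun s : ℝ => Real.sinh ((T - s) * b))
      (Real.cosh ((T - t) * b) * (-b)) t :=
    (Real.hasDerivAt_sinh _).comp t (inner_hasDerivAt b T t)
  have h3 : HasDerivAt (fun s : ℝ => Real.cosh ((T - s) * b))
      (Real.sinh ((T - t) * b) * (-b)) t :=
    (Real.hasDerivAt_cosh _).comp t (inner_hasDerivAt b T t)
  have h4 : HasDerivAt (fun s : ℝ => a * Real.sinh ((T - s) * b) - b * Real.cosh ((T - s) * b))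
      (a * (Real.cosh ((T - t) * b) * (-b)) - b * (Real.sinh ((T - t) * b) * (-b))) t :=
    (h2.const_mul a).sub (h3.const_mul b)
  have h := (((exp_hasDerivAt a t).const_mul C).mul h4).div_const D
  unfold F1 F2
  exact h.congr_deriv (by ring)

lemma F0_contDiff (C a b T D : ℝ) : ContDiff ℝ 2 (F0 C a b T D) :=
  (((contDiff_const.mul (Real.contDiff_exp.comp (contDiff_const.mul contDiff_id))).mul
    (Real.contDiff_sinh.comp ((contDiff_const.sub contDiff_id).mul contDiff_const)))).div_const D

lemma ode_scalar (c1 c2 c3 C a b T D : ℝ)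
    (hcos : c2 * b + 2 * c1 * a * b = 0)
    (hsin : c1 * (a ^ 2 + b ^ 2) + c2 * a = c3) :
    ∀ t, c3 * F0 C a b T D t = c2 * F1 C a b T D t + c1 * F2 C a b T D t := by
  intro t
  unfold F0 F1 F2
  linear_combination (C * Real.exp (a * t) * Real.cosh ((T - t) * b) / D) * hcos
    - (C * Real.exp (a * t) * Real.sinh ((T - t) * b) / D) * hsin

lemma F0_zero (C a b T D : ℝ) (hD : D = Real.sinh (T * b)) (hD0 : D ≠ 0) :
    F0 C a b T D 0 = C := by
  unfold F0
  rw [mul_zero, Real.exp_zero, sub_zero, mul_one, hD]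
  rw [hD] at hD0
  field_simp

lemma F0_T (C a b T D : ℝ) : F0 C a b T D T = 0 := by
  simp [F0]

lemma mp_le (a b : ℝ) (hab : a < b) (c1 c2 c3 : ℝ) (hc1 : 0 < c1) (hc3 : 0 < c3)
    (u : ℝ → ℝ) (hu : ContDiff ℝ 2 u)
    (heq : ∀ t ∈ Icc a b, c1 * deriv (deriv u) t = c2 * deriv u t + c3 * u t)
    (ha : u a = 0) (hb : u b = 0) : ∀ t ∈ Icc a b, u t ≤ 0 := by
  have hcont : Continuous u := hu.continuous
  obtain ⟨t0, ht0, hmax⟩ := isCompact_Icc.exists_isMaxOn (nonempty_Icc.mpr hab.le)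
    hcont.continuousOn
  suffices h : u t0 ≤ 0 by
    intro t ht
    exact (hmax ht).trans h
  by_contra hpos
  push_neg at hpos
  have hta : t0 ≠ a := fun h => by rw [h, ha] at hpos; exact lt_irrefl _ hpos
  have htb : t0 ≠ b := fun h => by rw [h, hb] at hpos; exact lt_irrefl _ hpos
  have hIoo : t0 ∈ Ioo a b := ⟨lt_of_le_of_ne ht0.1 (Ne.symm hta), lt_of_le_of_ne ht0.2 htb⟩
  have hloc : IsLocalMax u t0 := hmax.isLocalMax (Icc_mem_nhds hIoo.1 hIoo.2)
  have hd0 : deriv u t0 = 0 := hloc.deriv_eq_zero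
  have hdd : ContDiff ℝ 1 (deriv u) :=
    (contDiff_succ_iff_deriv.mp (hu.of_le (by norm_num))).2.2
  have hcont2 : Continuous (deriv (deriv u)) := hdd.continuous_deriv le_rfl
  have h2pos : 0 < deriv (deriv u) t0 := by
    have h := heq t0 ⟨hIoo.1.le, hIoo.2.le⟩
    rw [hd0] at h
    nlinarith [mul_pos hc3 hpos]
  have hnb : (deriv (deriv u)) ⁻¹' Ioi 0 ∈ nhds t0 :=
    hcont2.continuousAt.preimage_mem_nhds (Ioi_mem_nhds h2pos)
  obtain ⟨ε, hε, hball⟩ := Metric.mem_nhds_iff.mp hnb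
  set t1 : ℝ := min (t0 + ε / 2) ((t0 + b) / 2) with ht1def
  have ht01 : t0 < t1 := lt_min (by linarith) (by linarith [hIoo.2])
  have ht1b : t1 < b := lt_of_le_of_lt (min_le_right _ _) (by linarith [hIoo.2])
  have ht1a : a < t1 := hIoo.1.trans ht01
  have hsub : Ioo t0 t1 ⊆ Metric.ball t0 ε := by
    intro x hx
    rw [Real.ball_eq_Ioo]
    constructor
    · linarith [hx.1]
    · have : t1 ≤ t0 + ε / 2 := min_le_left _ _
      linarith [hx.2]
  have hderivpos : ∀ x ∈ Ioo t0 t1, 0 < deriv (deriv u) x := fun x hx => hball (hsub hx)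
  have hmono1 : StrictMonoOn (deriv u) (Icc t0 t1) := by
    apply strictMonoOn_of_deriv_pos (convex_Icc _ _) hdd.continuous.continuousOn
    intro x hx
    rw [interior_Icc] at hx
    exact hderivpos x hx
  have hupos : ∀ x ∈ Ioo t0 t1, 0 < deriv u x := by
    intro x hx
    have := hmono1 ⟨le_refl t0, ht01.le⟩ ⟨hx.1.le, hx.2.le⟩ hx.1
    rw [hd0] at this
    exact this
  have hmono2 : StrictMonoOn u (Icc t0 t1) := by
    apply strictMonoOn_of_deriv_pos (convex_Icc _ _) hcont.continuousOn
    intro x hx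
    rw [interior_Icc] at hx
    exact hupos x hx
  have hlt : u t0 < u t1 := hmono2 ⟨le_refl t0, ht01.le⟩ ⟨ht01.le, le_refl t1⟩ ht01
  have : u t1 ≤ u t0 := hmax ⟨ht1a.le, ht1b.le⟩
  linarith

lemma mp (a b : ℝ) (hab : a < b) (c1 c2 c3 : ℝ) (hc1 : 0 < c1) (hc3 : 0 < c3)
    (u : ℝ → ℝ) (hu : ContDiff ℝ 2 u)
    (heq : ∀ t ∈ Icc a b, c1 * deriv (deriv u) t = c2 * deriv u t + c3 * u t)
    (ha : u a = 0) (hb : u b = 0) : ∀ t ∈ Icc a b, u t = 0 := by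
  have h1 := mp_le a b hab c1 c2 c3 hc1 hc3 u hu heq ha hb
  have hn1 : deriv (fun s => -u s) = fun s => -(deriv u s) := funext fun s => deriv.neg
  have h2 := mp_le a b hab c1 c2 c3 hc1 hc3 (fun t => -u t) hu.neg ?_ (by simp [ha]) (by simp [hb])
  · intro t ht
    have h1' := h1 t ht
    have h2' := h2 t ht
    simp only [neg_nonpos] at h2'
    linarith
  · intro t ht
    rw [hn1]
    have hn2 : deriv (fun s => -(deriv u s)) = fun s => -(deriv (deriv u) s) :=
      funext fun s => deriv.neg
    rw [hn2]
    have := heq t ht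
    simp only []
    linarith

end Stmt6Aux

open Stmt6Aux in
/-- `X₁* = (Σ+Δ)/2` and `X₂* = (Σ−Δ)/2` form the unique pair of
C² functions solving the two-player Euler–Lagrange boundary value system. -/
theorem stmt_6 (T : ℝ) (hT : 0 < T) (lam gam sig al : ℝ)
    (hlam : 0 < lam) (hgam : 0 ≤ gam) (hsig : 0 < sig) (hal : 0 < al)
    (x1 x2 : ℝ) :
    SolvesTwoPlayer T lam gam sig al x1 x2
      (fun t => (SigmaTwo lam gam sig al T x1 x2 t
        + DeltaTwo lam gam sig al T x1 x2 t) / 2)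
      (fun t => (SigmaTwo lam gam sig al T x1 x2 t
        - DeltaTwo lam gam sig al T x1 x2 t) / 2) ∧
    (∀ X1 X2 : ℝ → ℝ, SolvesTwoPlayer T lam gam sig al x1 x2 X1 X2 →
      EqOn X1 (fun t => (SigmaTwo lam gam sig al T x1 x2 t
        + DeltaTwo lam gam sig al T x1 x2 t) / 2) (Icc 0 T) ∧
      EqOn X2 (fun t => (SigmaTwo lam gam sig al T x1 x2 t
        - DeltaTwo lam gam sig al T x1 x2 t) / 2) (Icc 0 T)) := by
  have hl6 : (6 : ℝ) * lam ≠ 0 := by positivity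
  have hl2 : (2 : ℝ) * lam ≠ 0 := by positivity
  -- abbreviations
  set kap : ℝ := Real.sqrt (gam ^ 2 + 12 * al * lam * sig ^ 2) with hkapdef
  set mu : ℝ := Real.sqrt (gam ^ 2 + 4 * al * lam * sig ^ 2) with hmudef
  have hkap2 : kap ^ 2 = gam ^ 2 + 12 * al * lam * sig ^ 2 := Real.sq_sqrt (by positivity)
  have hmu2 : mu ^ 2 = gam ^ 2 + 4 * al * lam * sig ^ 2 := Real.sq_sqrt (by positivity)
  have hkappos : 0 < kap := Real.sqrt_pos.mpr (by positivity)
  have hmupos : 0 < mu := Real.sqrt_pos.mpr (by positivity)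
  set aS : ℝ := -gam / (6 * lam) with haSdef
  set bS : ℝ := kap / (6 * lam) with hbSdef
  set aD : ℝ := gam / (2 * lam) with haDdef
  set bD : ℝ := mu / (2 * lam) with hbDdef
  have hbSpos : 0 < bS := by rw [hbSdef]; positivity
  have hbDpos : 0 < bD := by rw [hbDdef]; positivity
  set DS : ℝ := Real.sinh (T * bS) with hDSdef
  set DD : ℝ := Real.sinh (T * bD) with hDDdef
  have hDSpos : 0 < DS := Real.sinh_pos_iff.mpr (by positivity)
  have hDDpos : 0 < DD := Real.sinh_pos_iff.mpr (by positivity)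
  have hDSne : DS ≠ 0 := ne_of_gt hDSpos
  have hDDne : DD ≠ 0 := ne_of_gt hDDpos
  set CS : ℝ := x1 + x2 with hCSdef
  set CD : ℝ := x1 - x2 with hCDdef
  -- representation
  have hSigma : SigmaTwo lam gam sig al T x1 x2 = F0 CS aS bS T DS := by
    funext t
    unfold SigmaTwo F0
    rw [show -(gam * t) / (6 * lam) = aS * t by rw [haSdef]; ring,
      show (T - t) * kap / (6 * lam) = (T - t) * bS by rw [hbSdef]; ring,
      show T * kap / (6 * lam) = T * bS by rw [hbSdef]; ring]
  have hDelta : DeltaTwo lam gam sig al T x1 x2 = F0 CD aD bD T DD := by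
    funext t
    unfold DeltaTwo F0
    rw [show gam * t / (2 * lam) = aD * t by rw [haDdef]; ring,
      show (T - t) * mu / (2 * lam) = (T - t) * bD by rw [hbDdef]; ring,
      show T * mu / (2 * lam) = T * bD by rw [hbDdef]; ring]
  -- scalar ODEs
  have hSode : ∀ t, al * sig ^ 2 * F0 CS aS bS T DS t
      = gam * F1 CS aS bS T DS t + 3 * lam * F2 CS aS bS T DS t := by
    apply ode_scalar
    · rw [haSdef, hbSdef]; field_simp; ring
    · rw [haSdef, hbSdef]
      field_simp
      linear_combination 3 * hkap2
  have hDode : ∀ t, al * sig ^ 2 * F0 CD aD bD T DD t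
      = -gam * F1 CD aD bD T DD t + lam * F2 CD aD bD T DD t := by
    apply ode_scalar
    · rw [haDdef, hbDdef]; field_simp; ring
    · rw [haDdef, hbDdef]
      field_simp
      linear_combination hmu2
  -- derivatives of the candidate pair
  have hX1d : ∀ t, HasDerivAt (fun t => (F0 CS aS bS T DS t + F0 CD aD bD T DD t) / 2)
      ((F1 CS aS bS T DS t + F1 CD aD bD T DD t) / 2) t :=
    fun t => ((F0_hasDerivAt CS aS bS T DS t).add (F0_hasDerivAt CD aD bD T DD t)).div_const 2
  have hX2d : ∀ t, HasDerivAt (fun t => (F0 CS aS bS T DS t - F0 CD aD bD T DD t) / 2)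
      ((F1 CS aS bS T DS t - F1 CD aD bD T DD t) / 2) t :=
    fun t => ((F0_hasDerivAt CS aS bS T DS t).sub (F0_hasDerivAt CD aD bD T DD t)).div_const 2
  have hX1d' : deriv (fun t => (F0 CS aS bS T DS t + F0 CD aD bD T DD t) / 2)
      = fun t => (F1 CS aS bS T DS t + F1 CD aD bD T DD t) / 2 :=
    funext fun t => (hX1d t).deriv
  have hX2d' : deriv (fun t => (F0 CS aS bS T DS t - F0 CD aD bD T DD t) / 2)
      = fun t => (F1 CS aS bS T DS t - F1 CD aD bD T DD t) / 2 :=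
    funext fun t => (hX2d t).deriv
  have hX1dd : deriv (deriv (fun t => (F0 CS aS bS T DS t + F0 CD aD bD T DD t) / 2))
      = fun t => (F2 CS aS bS T DS t + F2 CD aD bD T DD t) / 2 := by
    rw [hX1d']
    exact funext fun t =>
      (((F1_hasDerivAt CS aS bS T DS t).add (F1_hasDerivAt CD aD bD T DD t)).div_const 2).deriv
  have hX2dd : deriv (deriv (fun t => (F0 CS aS bS T DS t - F0 CD aD bD T DD t) / 2))
      = fun t => (F2 CS aS bS T DS t - F2 CD aD bD T DD t) / 2 := by
    rw [hX2d']
    exact funext fun t =>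
      (((F1_hasDerivAt CS aS bS T DS t).sub (F1_hasDerivAt CD aD bD T DD t)).div_const 2).deriv
  constructor
  · refine ⟨?_, ?_, ?_, ?_, ?_, ?_, ?_, ?_⟩
    · rw [hSigma, hDelta]
      exact ((F0_contDiff CS aS bS T DS).add (F0_contDiff CD aD bD T DD)).div_const 2
    · rw [hSigma, hDelta]
      exact ((F0_contDiff CS aS bS T DS).sub (F0_contDiff CD aD bD T DD)).div_const 2
    · intro t ht
      rw [hSigma, hDelta]
      rw [hX1dd, hX2dd, hX2d']
      linear_combination (hSode t) / 2 + (hDode t) / 2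
    · intro t ht
      rw [hSigma, hDelta]
      rw [hX2dd, hX1dd, hX1d']
      linear_combination (hSode t) / 2 - (hDode t) / 2
    · rw [hSigma, hDelta]
      simp only [F0_zero CS aS bS T DS hDSdef hDSne, F0_zero CD aD bD T DD hDDdef hDDne]
      rw [hCSdef, hCDdef]; ring
    · rw [hSigma, hDelta]
      simp only [F0_zero CS aS bS T DS hDSdef hDSne, F0_zero CD aD bD T DD hDDdef hDDne]
      rw [hCSdef, hCDdef]; ring
    · rw [hSigma, hDelta]
      simp only [F0_T]
      norm_num
    · rw [hSigma, hDelta]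
      simp only [F0_T]
      norm_num
  · rintro X1 X2 ⟨hC1, hC2, hEL1, hEL2, hB10, hB20, hB1T, hB2T⟩
    have hX1dif : Differentiable ℝ X1 := hC1.differentiable (by norm_num)
    have hX2dif : Differentiable ℝ X2 := hC2.differentiable (by norm_num)
    have hX1dif2 : Differentiable ℝ (deriv X1) :=
      ((contDiff_succ_iff_deriv (n := 1)).mp (hC1.of_le (by norm_num))).2.2.differentiable one_ne_zero
    have hX2dif2 : Differentiable ℝ (deriv X2) :=
      ((contDiff_succ_iff_deriv (n := 1)).mp (hC2.of_le (by norm_num))).2.2.differentiable one_ne_zero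
    -- u = X1 + X2 - Σ
    set u : ℝ → ℝ := fun t => X1 t + X2 t - F0 CS aS bS T DS t with hudef
    set v : ℝ → ℝ := fun t => X1 t - X2 t - F0 CD aD bD T DD t with hvdef
    have hud : deriv u = fun t => deriv X1 t + deriv X2 t - F1 CS aS bS T DS t :=
      funext fun t => ((((hX1dif t).hasDerivAt).add ((hX2dif t).hasDerivAt)).sub
        (F0_hasDerivAt CS aS bS T DS t)).deriv
    have hudd : deriv (deriv u) = fun t =>
        deriv (deriv X1) t + deriv (deriv X2) t - F2 CS aS bS T DS t := by
      rw [hud]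
      exact funext fun t => ((((hX1dif2 t).hasDerivAt).add ((hX2dif2 t).hasDerivAt)).sub
        (F1_hasDerivAt CS aS bS T DS t)).deriv
    have hvd : deriv v = fun t => deriv X1 t - deriv X2 t - F1 CD aD bD T DD t :=
      funext fun t => ((((hX1dif t).hasDerivAt).sub ((hX2dif t).hasDerivAt)).sub
        (F0_hasDerivAt CD aD bD T DD t)).deriv
    have hvdd : deriv (deriv v) = fun t =>
        deriv (deriv X1) t - deriv (deriv X2) t - F2 CD aD bD T DD t := by
      rw [hvd]
      exact funext fun t => ((((hX1dif2 t).hasDerivAt).sub ((hX2dif2 t).hasDerivAt)).sub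
        (F1_hasDerivAt CD aD bD T DD t)).deriv
    have hucd : ContDiff ℝ 2 u := (hC1.add hC2).sub (F0_contDiff CS aS bS T DS)
    have hvcd : ContDiff ℝ 2 v := (hC1.sub hC2).sub (F0_contDiff CD aD bD T DD)
    have hu0 : ∀ t ∈ Icc (0 : ℝ) T, u t = 0 := by
      apply mp 0 T hT (3 * lam) (-gam) (al * sig ^ 2) (by positivity) (by positivity) u hucd
      · intro t ht
        rw [hudd, hud]
        have hut : u t = X1 t + X2 t - F0 CS aS bS T DS t := rfl
        rw [hut]
        linear_combination (-1 : ℝ) * (hEL1 t ht) + (-1 : ℝ) * (hEL2 t ht) + hSode t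
      · show X1 0 + X2 0 - F0 CS aS bS T DS 0 = 0
        rw [hB10, hB20, F0_zero CS aS bS T DS hDSdef hDSne, hCSdef]
        ring
      · show X1 T + X2 T - F0 CS aS bS T DS T = 0
        rw [hB1T, hB2T, F0_T]
        ring
    have hv0 : ∀ t ∈ Icc (0 : ℝ) T, v t = 0 := by
      apply mp 0 T hT lam gam (al * sig ^ 2) hlam (by positivity) v hvcd
      · intro t ht
        rw [hvdd, hvd]
        have hvt : v t = X1 t - X2 t - F0 CD aD bD T DD t := rfl
        rw [hvt]
        linear_combination (-1 : ℝ) * (hEL1 t ht) + (hEL2 t ht) + hDode t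
      · show X1 0 - X2 0 - F0 CD aD bD T DD 0 = 0
        rw [hB10, hB20, F0_zero CD aD bD T DD hDDdef hDDne, hCDdef]
        ring
      · show X1 T - X2 T - F0 CD aD bD T DD T = 0
        rw [hB1T, hB2T, F0_T]
        ring
    constructor
    · intro t ht
      have h1 : X1 t + X2 t - F0 CS aS bS T DS t = 0 := hu0 t ht
      have h2 : X1 t - X2 t - F0 CD aD bD T DD t = 0 := hv0 t ht
      show X1 t = (SigmaTwo lam gam sig al T x1 x2 t + DeltaTwo lam gam sig al T x1 x2 t) / 2
      rw [hSigma, hDelta]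
      linarith
    · intro t ht
      have h1 : X1 t + X2 t - F0 CS aS bS T DS t = 0 := hu0 t ht
      have h2 : X1 t - X2 t - F0 CD aD bD T DD t = 0 := hv0 t ht
      show X2 t = (SigmaTwo lam gam sig al T x1 x2 t - DeltaTwo lam gam sig al T x1 x2 t) / 2
      rw [hSigma, hDelta]
      linarith
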